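/- Let G = (V, E, f) be a d-featured graph, L ≥ 1, c ≥ 1, and suppose there are a vertex v ∈ V and distinct vertices w⁽¹⁾, …, w⁽ᶜ⁾, w′ ∈ V such that G, w⁽ⁱ⁾ ∼^{L−1,c} G, w′ and (v, w⁽ⁱ⁾) ∈ E for all i ∈ {1,…,c}, while (v, w′) ∉ E. Let G′ = (V, E ∪ {(v, w′)}, f). Then G, u ∼^{L,c,*}_∃ G′, u for every u ∈ V. -/
import Mathlib

/-- A `d`-featured directed graph: finite nonempty vertex set, edge relation,
and a feature map into `{0,1}^d` (represented as `Fin d → Bool`). -/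
structure FGraph (d : ℕ) where
  V : Type
  [fintypeV : Fintype V]
  nonemptyV : Nonempty V
  E : V → V → Prop
  f : V → Fin d → Bool

attribute [instance] FGraph.fintypeV

/-- `c`-graded `L`-turn bisimilarity between pointed `d`-featured graphs. -/
def bisim (d c : ℕ) : (L : ℕ) → (G₁ G₂ : FGraph d) → G₁.V → G₂.V → Prop
  | 0, G₁, G₂, v₁, v₂ => G₁.f v₁ = G₂.f v₂
  | L + 1, G₁, G₂, v₁, v₂ =>
      G₁.f v₁ = G₂.f v₂ ∧
      (∀ k, k ≤ c → ∀ u₁ : Fin k → G₁.V, Function.Injective u₁ →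
        (∀ i, G₁.E v₁ (u₁ i)) →
        ∃ u₂ : Fin k → G₂.V, Function.Injective u₂ ∧ (∀ i, G₂.E v₂ (u₂ i)) ∧
          ∀ i, bisim d c L G₁ G₂ (u₁ i) (u₂ i)) ∧
      (∀ k, k ≤ c → ∀ u₂ : Fin k → G₂.V, Function.Injective u₂ →
        (∀ i, G₂.E v₂ (u₂ i)) →
        ∃ u₁ : Fin k → G₁.V, Function.Injective u₁ ∧ (∀ i, G₁.E v₁ (u₁ i)) ∧
          ∀ i, bisim d c L G₁ G₂ (u₁ i) (u₂ i))

/-- `∼^{L,c,*}_∃` : `c`-graded `L`-turn bisimilarity with (unbounded) global counting. -/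
def bisimStar (d c L : ℕ) (G₁ G₂ : FGraph d) (v₁ : G₁.V) (v₂ : G₂.V) : Prop :=
  bisim d c L G₁ G₂ v₁ v₂ ∧
  (∀ u : G₁.V,
    Set.ncard {u₁ : G₁.V | bisim d c L G₁ G₁ u₁ u} =
      Set.ncard {u₂ : G₂.V | bisim d c L G₂ G₁ u₂ u}) ∧
  (∀ u : G₂.V,
    Set.ncard {u₁ : G₁.V | bisim d c L G₁ G₂ u₁ u} =
      Set.ncard {u₂ : G₂.V | bisim d c L G₂ G₂ u₂ u})

/-- `∼^{L,c,q}_∃` : `c`-graded `L`-turn bisimilarity with global counting bounded by `q`. -/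
def bisimQ (d c L q : ℕ) (G₁ G₂ : FGraph d) (v₁ : G₁.V) (v₂ : G₂.V) : Prop :=
  bisim d c L G₁ G₂ v₁ v₂ ∧
  (∀ u : G₁.V,
    min (Set.ncard {u₁ : G₁.V | bisim d c L G₁ G₁ u₁ u}) q =
      min (Set.ncard {u₂ : G₂.V | bisim d c L G₂ G₁ u₂ u}) q) ∧
  (∀ u : G₂.V,
    min (Set.ncard {u₁ : G₁.V | bisim d c L G₁ G₂ u₁ u}) q =
      min (Set.ncard {u₂ : G₂.V | bisim d c L G₂ G₂ u₂ u}) q)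

section Aux

variable {d c : ℕ}

lemma bisim_refl : ∀ (ℓ : ℕ) (G : FGraph d) (x : G.V), bisim d c ℓ G G x x := by
  intro ℓ
  induction ℓ with
  | zero => intro G x; rfl
  | succ ℓ ih =>
    intro G x
    exact ⟨rfl,
      fun k hk u hu he => ⟨u, hu, he, fun i => ih G (u i)⟩,
      fun k hk u hu he => ⟨u, hu, he, fun i => ih G (u i)⟩⟩

lemma bisim_symm : ∀ (ℓ : ℕ) (G₁ G₂ : FGraph d) (x : G₁.V) (y : G₂.V),
    bisim d c ℓ G₁ G₂ x y → bisim d c ℓ G₂ G₁ y x := by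
  intro ℓ
  induction ℓ with
  | zero => intro _ _ _ _ h; exact h.symm
  | succ ℓ ih =>
    rintro G₁ G₂ x y ⟨hf, hforth, hback⟩
    refine ⟨hf.symm, ?_, ?_⟩
    · intro k hk u hu he
      obtain ⟨u₁, h1, h2, h3⟩ := hback k hk u hu he
      exact ⟨u₁, h1, h2, fun i => ih _ _ _ _ (h3 i)⟩
    · intro k hk u hu he
      obtain ⟨u₂, h1, h2, h3⟩ := hforth k hk u hu he
      exact ⟨u₂, h1, h2, fun i => ih _ _ _ _ (h3 i)⟩

lemma bisim_trans : ∀ (ℓ : ℕ) (G₁ G₂ G₃ : FGraph d) (x : G₁.V) (y : G₂.V) (z : G₃.V),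
    bisim d c ℓ G₁ G₂ x y → bisim d c ℓ G₂ G₃ y z → bisim d c ℓ G₁ G₃ x z := by
  intro ℓ
  induction ℓ with
  | zero => intro _ _ _ _ _ _ h h'; exact h.trans h'
  | succ ℓ ih =>
    rintro G₁ G₂ G₃ x y z ⟨hf, hforth, hback⟩ ⟨hf', hforth', hback'⟩
    refine ⟨hf.trans hf', ?_, ?_⟩
    · intro k hk u hu he
      obtain ⟨u₂, h1, h2, h3⟩ := hforth k hk u hu he
      obtain ⟨u₃, g1, g2, g3⟩ := hforth' k hk u₂ h1 h2
      exact ⟨u₃, g1, g2, fun i => ih _ _ _ _ _ _ (h3 i) (g3 i)⟩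
    · intro k hk u hu he
      obtain ⟨u₂, h1, h2, h3⟩ := hback' k hk u hu he
      obtain ⟨u₁, g1, g2, g3⟩ := hback k hk u₂ h1 h2
      exact ⟨u₁, g1, g2, fun i => ih _ _ _ _ _ _ (g3 i) (h3 i)⟩

lemma bisim_of_succ : ∀ (ℓ : ℕ) (G₁ G₂ : FGraph d) (x : G₁.V) (y : G₂.V),
    bisim d c (ℓ + 1) G₁ G₂ x y → bisim d c ℓ G₁ G₂ x y := by
  intro ℓ
  induction ℓ with
  | zero => rintro _ _ _ _ ⟨hf, _, _⟩; exact hf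
  | succ ℓ ih =>
    rintro G₁ G₂ x y ⟨hf, hforth, hback⟩
    refine ⟨hf, ?_, ?_⟩
    · intro k hk u hu he
      obtain ⟨u₂, h1, h2, h3⟩ := hforth k hk u hu he
      exact ⟨u₂, h1, h2, fun i => ih _ _ _ _ (h3 i)⟩
    · intro k hk u hu he
      obtain ⟨u₁, h1, h2, h3⟩ := hback k hk u hu he
      exact ⟨u₁, h1, h2, fun i => ih _ _ _ _ (h3 i)⟩

lemma bisim_mono {ℓ' ℓ : ℕ} (h : ℓ' ≤ ℓ) (G₁ G₂ : FGraph d) (x : G₁.V) (y : G₂.V) :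
    bisim d c ℓ G₁ G₂ x y → bisim d c ℓ' G₁ G₂ x y := by
  induction h with
  | refl => exact id
  | step h ih => exact fun hb => ih (bisim_of_succ _ _ _ _ _ hb)

/-- The "forth" clause, abstracted. -/
def Forth (c : ℕ) {V₁ V₂ : Type} (e₁ : V₁ → V₁ → Prop) (e₂ : V₂ → V₂ → Prop)
    (R : V₁ → V₂ → Prop) (x : V₁) (y : V₂) : Prop :=
  ∀ k, k ≤ c → ∀ u₁ : Fin k → V₁, Function.Injective u₁ → (∀ i, e₁ x (u₁ i)) →
    ∃ u₂ : Fin k → V₂, Function.Injective u₂ ∧ (∀ i, e₂ y (u₂ i)) ∧ ∀ i, R (u₁ i) (u₂ i)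

lemma bisim_succ_iff (ℓ : ℕ) (G₁ G₂ : FGraph d) (x : G₁.V) (y : G₂.V) :
    bisim d c (ℓ + 1) G₁ G₂ x y ↔
      G₁.f x = G₂.f y ∧ Forth c G₁.E G₂.E (bisim d c ℓ G₁ G₂) x y ∧
        Forth c G₂.E G₁.E (fun a b => bisim d c ℓ G₁ G₂ b a) y x :=
  Iff.rfl

lemma Forth_congr {V₁ V₂ : Type} {e₁ : V₁ → V₁ → Prop} {e₂ : V₂ → V₂ → Prop}
    {R R' : V₁ → V₂ → Prop} {x : V₁} {y : V₂}
    (h : ∀ a b, R a b ↔ R' a b) : Forth c e₁ e₂ R x y ↔ Forth c e₁ e₂ R' x y := by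
  constructor
  · intro H k hk u hu he
    obtain ⟨u₂, h1, h2, h3⟩ := H k hk u hu he
    exact ⟨u₂, h1, h2, fun i => (h _ _).mp (h3 i)⟩
  · intro H k hk u hu he
    obtain ⟨u₂, h1, h2, h3⟩ := H k hk u hu he
    exact ⟨u₂, h1, h2, fun i => (h _ _).mpr (h3 i)⟩

lemma Forth_mono_left {V₁ V₂ : Type} {e₁ e₁' : V₁ → V₁ → Prop} {e₂ : V₂ → V₂ → Prop}
    {R : V₁ → V₂ → Prop} {x : V₁} {y : V₂}
    (h : ∀ a b, e₁' a b → e₁ a b) : Forth c e₁ e₂ R x y → Forth c e₁' e₂ R x y :=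
  fun H k hk u hu he => H k hk u hu fun i => h _ _ (he i)

lemma Forth_mono_right {V₁ V₂ : Type} {e₁ : V₁ → V₁ → Prop} {e₂ e₂' : V₂ → V₂ → Prop}
    {R : V₁ → V₂ → Prop} {x : V₁} {y : V₂}
    (h : ∀ a b, e₂ a b → e₂' a b) : Forth c e₁ e₂ R x y → Forth c e₁ e₂' R x y := by
  intro H k hk u hu he
  obtain ⟨u₂, h1, h2, h3⟩ := H k hk u hu he
  exact ⟨u₂, h1, fun i => h _ _ (h2 i), h3⟩

lemma exists_fresh {V : Type} {k : ℕ} (hk : k ≤ c) (w : Fin c → V) (w' : V)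
    (hdist : Function.Injective w) (hne : ∀ i, w i ≠ w')
    (u : Fin k → V) (hinj : Function.Injective u) (i0 : Fin k) (hi0 : u i0 = w') :
    ∃ j, ∀ i, w j ≠ u i := by
  classical
  by_contra h
  push_neg at h
  have hsub : Finset.univ.image w ⊆ (Finset.univ.image u).erase w' := by
    intro a ha
    simp only [Finset.mem_image, Finset.mem_univ, true_and] at ha
    obtain ⟨j, rfl⟩ := ha
    obtain ⟨i, hi⟩ := h j
    exact Finset.mem_erase.2 ⟨hne j, Finset.mem_image.2 ⟨i, Finset.mem_univ i, hi.symm⟩⟩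
  have h1 : (Finset.univ.image w).card = c := by
    rw [Finset.card_image_of_injective _ hdist, Finset.card_univ, Fintype.card_fin]
  have h2 : ((Finset.univ.image u).erase w').card = k - 1 := by
    rw [Finset.card_erase_of_mem (Finset.mem_image.2 ⟨i0, Finset.mem_univ _, hi0⟩),
      Finset.card_image_of_injective _ hinj, Finset.card_univ, Fintype.card_fin]
  have hle := Finset.card_le_card hsub
  have hk0 : 0 < k := i0.pos
  omega

lemma swap_family {V : Type} {k : ℕ} (hk : k ≤ c) (v w' : V) (w : Fin c → V)
    (E : V → V → Prop)
    (hdist : Function.Injective w) (hne : ∀ i, w i ≠ w') (hEw : ∀ i, E v (w i))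
    (u : Fin k → V) (hinj : Function.Injective u)
    (he : ∀ i, E v (u i) ∨ u i = w')
    (R₀ : V → V → Prop) (hrefl : ∀ a, R₀ a a) (hRw : ∀ j, R₀ (w j) w') :
    ∃ u'' : Fin k → V, Function.Injective u'' ∧ (∀ i, E v (u'' i)) ∧
      ∀ i, R₀ (u'' i) (u i) := by
  classical
  by_cases hmem : ∃ i0, u i0 = w'
  · obtain ⟨i0, hi0⟩ := hmem
    obtain ⟨j, hj⟩ := exists_fresh hk w w' hdist hne u hinj i0 hi0
    refine ⟨fun i => if i = i0 then w j else u i, ?_, ?_, ?_⟩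
    · intro a b hab
      dsimp only at hab
      by_cases ha : a = i0 <;> by_cases hb : b = i0
      · rw [ha, hb]
      · rw [if_pos ha, if_neg hb] at hab; exact absurd hab (hj b)
      · rw [if_neg ha, if_pos hb] at hab; exact absurd hab.symm (hj a)
      · rw [if_neg ha, if_neg hb] at hab; exact hinj hab
    · intro i
      dsimp only
      by_cases hi : i = i0
      · rw [if_pos hi]; exact hEw j
      · rw [if_neg hi]
        rcases he i with h | h
        · exact h
        · exact absurd (hinj (h.trans hi0.symm)) hi
    · intro i
      dsimp only
      by_cases hi : i = i0
      · rw [if_pos hi, hi, hi0]; exact hRw j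
      · rw [if_neg hi]; exact hrefl _
  · push_neg at hmem
    refine ⟨u, hinj, fun i => ?_, fun i => hrefl _⟩
    rcases he i with h | h
    · exact h
    · exact absurd h (hmem i)

lemma Forth_source {V : Type} (v w' : V) (w : Fin c → V) (E e₂ : V → V → Prop)
    (hdist : Function.Injective w) (hne : ∀ i, w i ≠ w') (hEw : ∀ i, E v (w i))
    (R₀ R : V → V → Prop) (hrefl : ∀ a, R₀ a a) (hRw : ∀ j, R₀ (w j) w')
    (hcomp : ∀ a a' b, R₀ a' a → R a' b → R a b)
    (x y : V) :
    Forth c E e₂ R x y →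
      Forth c (fun a b => E a b ∨ (a = v ∧ b = w')) e₂ R x y := by
  intro H k hk u hu he
  by_cases hx : v = x
  · subst hx
    have he' : ∀ i, E v (u i) ∨ u i = w' := fun i => (he i).imp id And.right
    obtain ⟨u'', h1, h2, h3⟩ := swap_family hk v w' w E hdist hne hEw u hu he' R₀ hrefl hRw
    obtain ⟨u₂, g1, g2, g3⟩ := H k hk u'' h1 h2
    exact ⟨u₂, g1, g2, fun i => hcomp _ _ _ (h3 i) (g3 i)⟩
  · refine H k hk u hu fun i => ?_
    rcases he i with h | h
    · exact h
    · exact absurd h.1.symm hx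

lemma Forth_target {V : Type} (v w' : V) (w : Fin c → V) (E e₁ : V → V → Prop)
    (hdist : Function.Injective w) (hne : ∀ i, w i ≠ w') (hEw : ∀ i, E v (w i))
    (R₀ R : V → V → Prop) (hrefl : ∀ a, R₀ a a) (hRw : ∀ j, R₀ (w j) w')
    (hcomp : ∀ b b' a, R₀ b' b → R a b → R a b')
    (x y : V) :
    Forth c e₁ (fun a b => E a b ∨ (a = v ∧ b = w')) R x y →
      Forth c e₁ E R x y := by
  intro H k hk u hu he
  obtain ⟨u₂, h1, h2, h3⟩ := H k hk u hu he
  by_cases hy : v = y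
  · subst hy
    have he' : ∀ i, E v (u₂ i) ∨ u₂ i = w' := fun i => (h2 i).imp id And.right
    obtain ⟨u'', g1, g2, g3⟩ := swap_family hk v w' w E hdist hne hEw u₂ h1 he' R₀ hrefl hRw
    exact ⟨u'', g1, g2, fun i => hcomp _ _ _ (g3 i) (h3 i)⟩
  · refine ⟨u₂, h1, fun i => ?_, h3⟩
    rcases h2 i with h | h
    · exact h
    · exact absurd h.1.symm hy

end Aux

section Key

variable {d c L : ℕ}

lemma key_iff (hc : 1 ≤ c)
    (G : FGraph d) (v : G.V) (w : Fin c → G.V) (w' : G.V)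
    (hdist : Function.Injective w) (hne : ∀ i, w i ≠ w')
    (hbis : ∀ i, bisim d c (L - 1) G G (w i) w')
    (hE : ∀ i, G.E v (w i)) :
    ∀ ℓ, ℓ ≤ L → ∀ x y : G.V,
      (bisim d c ℓ G { G with E := fun a b => G.E a b ∨ (a = v ∧ b = w') } x y ↔
        bisim d c ℓ G G x y) ∧
      (bisim d c ℓ { G with E := fun a b => G.E a b ∨ (a = v ∧ b = w') } G x y ↔
        bisim d c ℓ G G x y) ∧
      (bisim d c ℓ { G with E := fun a b => G.E a b ∨ (a = v ∧ b = w') }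
        { G with E := fun a b => G.E a b ∨ (a = v ∧ b = w') } x y ↔
        bisim d c ℓ G G x y) := by
  set G' : FGraph d := { G with E := fun a b => G.E a b ∨ (a = v ∧ b = w') } with hG'
  intro ℓ
  induction ℓ with
  | zero => exact fun _ x y => ⟨Iff.rfl, Iff.rfl, Iff.rfl⟩
  | succ ℓ ih =>
    intro hℓ x y
    have hℓ' : ℓ ≤ L := Nat.le_of_succ_le hℓ
    have ih' := ih hℓ'
    have ih1 : ∀ a b : G.V, bisim d c ℓ G G' a b ↔ bisim d c ℓ G G a b :=
      fun a b => (ih' a b).1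
    have ih2 : ∀ a b : G.V, bisim d c ℓ G' G a b ↔ bisim d c ℓ G G a b :=
      fun a b => (ih' a b).2.1
    have ih3 : ∀ a b : G.V, bisim d c ℓ G' G' a b ↔ bisim d c ℓ G G a b :=
      fun a b => (ih' a b).2.2
    set R₀ : G.V → G.V → Prop := bisim d c ℓ G G with hR₀
    have hrefl : ∀ a, R₀ a a := fun a => bisim_refl ℓ G a
    have hsymm : ∀ a b, R₀ a b → R₀ b a := fun a b => bisim_symm ℓ G G a b
    have htrans : ∀ a b e, R₀ a b → R₀ b e → R₀ a e :=
      fun a b e => bisim_trans ℓ G G G a b e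
    have hRw : ∀ j, R₀ (w j) w' := by
      intro j
      exact bisim_mono (by omega : ℓ ≤ L - 1) G G _ _ (hbis j)
    have hEmono : ∀ a b : G.V, G.E a b → G.E a b ∨ (a = v ∧ b = w') := fun a b => Or.inl
    -- the four Forth equivalences (for R₀ and its swap)
    have hFt : Forth c G.E G'.E R₀ x y ↔ Forth c G.E G.E R₀ x y := by
      constructor
      · exact Forth_target v w' w G.E G.E hdist hne hE R₀ R₀ hrefl hRw
          (fun b b' a h1 h2 => htrans _ _ _ h2 (hsymm _ _ h1)) x y
      · exact Forth_mono_right hEmono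
    have hFtSwap : ∀ x y : G.V,
        Forth c G.E G'.E (fun a b => R₀ b a) x y ↔
          Forth c G.E G.E (fun a b => R₀ b a) x y := by
      intro x y
      constructor
      · exact Forth_target v w' w G.E G.E hdist hne hE R₀ (fun a b => R₀ b a) hrefl hRw
          (fun b b' a h1 h2 => htrans _ _ _ h1 h2) x y
      · exact Forth_mono_right hEmono
    have hFs : ∀ x y : G.V,
        Forth c G'.E G.E R₀ x y ↔ Forth c G.E G.E R₀ x y := by
      intro x y
      constructor
      · exact Forth_mono_left hEmono
      · exact Forth_source v w' w G.E G.E hdist hne hE R₀ R₀ hrefl hRw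
          (fun a a' b h1 h2 => htrans _ _ _ (hsymm _ _ h1) h2) x y
    have hFsSwap : ∀ x y : G.V,
        Forth c G'.E G.E (fun a b => R₀ b a) x y ↔
          Forth c G.E G.E (fun a b => R₀ b a) x y := by
      intro x y
      constructor
      · exact Forth_mono_left hEmono
      · exact Forth_source v w' w G.E G.E hdist hne hE R₀ (fun a b => R₀ b a) hrefl hRw
          (fun a a' b h1 h2 => htrans _ _ _ h2 h1) x y
    have hFboth : ∀ x y : G.V,
        Forth c G'.E G'.E R₀ x y ↔ Forth c G.E G.E R₀ x y := by
      intro x y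
      constructor
      · intro H
        have step1 : Forth c G'.E G.E R₀ x y :=
          Forth_target v w' w G.E G'.E hdist hne hE R₀ R₀ hrefl hRw
            (fun b b' a h1 h2 => htrans _ _ _ h2 (hsymm _ _ h1)) x y H
        exact (hFs x y).1 step1
      · intro H
        have step1 : Forth c G.E G'.E R₀ x y := Forth_mono_right hEmono H
        exact Forth_source v w' w G.E G'.E hdist hne hE R₀ R₀ hrefl hRw
          (fun a a' b h1 h2 => htrans _ _ _ (hsymm _ _ h1) h2) x y step1
    have hFbothSwap : ∀ x y : G.V,
        Forth c G'.E G'.E (fun a b => R₀ b a) x y ↔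
          Forth c G.E G.E (fun a b => R₀ b a) x y := by
      intro x y
      constructor
      · intro H
        have step1 : Forth c G'.E G.E (fun a b => R₀ b a) x y :=
          Forth_target v w' w G.E G'.E hdist hne hE R₀ (fun a b => R₀ b a) hrefl hRw
            (fun b b' a h1 h2 => htrans _ _ _ h1 h2) x y H
        exact (hFsSwap x y).1 step1
      · intro H
        have step1 : Forth c G.E G'.E (fun a b => R₀ b a) x y := Forth_mono_right hEmono H
        exact Forth_source v w' w G.E G'.E hdist hne hE R₀ (fun a b => R₀ b a) hrefl hRw
          (fun a a' b h1 h2 => htrans _ _ _ h2 h1) x y step1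
    refine ⟨?_, ?_, ?_⟩
    · -- bisim (ℓ+1) G G' x y ↔ bisim (ℓ+1) G G x y
      rw [bisim_succ_iff, bisim_succ_iff]
      exact and_congr Iff.rfl (and_congr
        ((Forth_congr ih1).trans hFt)
        ((Forth_congr (fun a b => ih1 b a)).trans (hFsSwap y x)))
    · rw [bisim_succ_iff, bisim_succ_iff]
      exact and_congr Iff.rfl (and_congr
        ((Forth_congr ih2).trans (hFs x y))
        ((Forth_congr (fun a b => ih2 b a)).trans (hFtSwap y x)))
    · rw [bisim_succ_iff, bisim_succ_iff]
      exact and_congr Iff.rfl (and_congr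
        ((Forth_congr ih3).trans (hFboth x y))
        ((Forth_congr (fun a b => ih3 b a)).trans (hFbothSwap y x)))

end Key

/-- If `v` already has `c` distinct out-neighbours
`w⁽¹⁾, …, w⁽ᶜ⁾`, each `∼^{L−1,c}`-bisimilar to a non-neighbour `w′`, then adding
the edge `(v, w′)` preserves `∼^{L,c,*}_∃` at every vertex. -/
theorem stmt9 (d c L : ℕ) (hc : 1 ≤ c) (hL : 1 ≤ L)
    (G : FGraph d) (v : G.V) (w : Fin c → G.V) (w' : G.V)
    (hdist : Function.Injective w) (hne : ∀ i, w i ≠ w')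
    (hbis : ∀ i, bisim d c (L - 1) G G (w i) w')
    (hE : ∀ i, G.E v (w i)) (hnE : ¬ G.E v w') :
    ∀ u : G.V,
      bisimStar d c L G { G with E := fun x y => G.E x y ∨ (x = v ∧ y = w') } u u := by
  intro u
  have key := key_iff hc G v w w' hdist hne hbis hE L le_rfl
  refine ⟨(key u u).1.mpr (bisim_refl L G u), ?_, ?_⟩
  · intro z
    exact congrArg Set.ncard (Set.ext fun x =>
      ⟨fun h => (key x z).2.1.mpr h, fun h => (key x z).2.1.mp h⟩)
  · intro z
    exact congrArg Set.ncard (Set.ext fun x =>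
      ⟨fun h => (key x z).2.2.mpr ((key x z).1.mp h),
       fun h => (key x z).1.mpr ((key x z).2.2.mp h)⟩)
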